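/- Let M be a matroid on a finite set E with rank function r and let F_1, …, F_m ⊆ E. If B is a base of M satisfying |B ∩ F_i| = r(F_i) for every i ∈ {1,…,m}, then for every σ ⊆ {1,…,m}, the set B ∩ (F_σ⁻ ∖ F_σ⁺) is a basis of F_σ⁻ ∖ F_σ⁺ in the contraction M/F_σ⁺. -/

import Mathlib

open Finset

/-- A (finite) matroid on a finite ground set `E`, given by a submodular rank function,
following the matroid rank axioms (R1)-(R3). -/
structure FinMatroid (α : Type*) [DecidableEq α] where
  E : Finset α
  r : Finset α → ℕ
  r_le_card : ∀ ⦃A : Finset α⦄, A ⊆ E → r A ≤ A.card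
  r_mono : ∀ ⦃A B : Finset α⦄, A ⊆ B → B ⊆ E → r A ≤ r B
  r_submod : ∀ ⦃A B : Finset α⦄, A ⊆ E → B ⊆ E → r (A ∪ B) + r (A ∩ B) ≤ r A + r B

namespace FinMatroid

variable {α : Type*} [DecidableEq α]

/-- A set is independent if it is a subset of the ground set whose rank is its cardinality. -/
def Indep (M : FinMatroid α) (A : Finset α) : Prop :=
  A ⊆ M.E ∧ M.r A = A.card

/-- A base is a maximal independent set. -/
def Base (M : FinMatroid α) (B : Finset α) : Prop :=
  M.Indep B ∧ ∀ ⦃A : Finset α⦄, M.Indep A → B ⊆ A → A = B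

/-- A basis of `A` is a maximal independent subset of `A`. -/
def BasisOf (M : FinMatroid α) (I A : Finset α) : Prop :=
  I ⊆ A ∧ M.Indep I ∧ ∀ ⦃J : Finset α⦄, J ⊆ A → M.Indep J → I ⊆ J → J = I

/-- A flat is a set `F` with `F = {s ∈ E : r (F ∪ {s}) = r F}`. -/
def Flat (M : FinMatroid α) (F : Finset α) : Prop :=
  F = M.E.filter (fun s => M.r (F ∪ {s}) = M.r F)

/-- A matroid is loopless if every singleton of the ground set has rank one. -/
def Loopless (M : FinMatroid α) : Prop :=
  ∀ s ∈ M.E, M.r {s} = 1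

/-- The restriction `M|A` of `M` to `A`. -/
def restrict (M : FinMatroid α) (A : Finset α) : FinMatroid α where
  E := A ∩ M.E
  r := M.r
  r_le_card := fun _ h => M.r_le_card (h.trans inter_subset_right)
  r_mono := fun _ _ h h' => M.r_mono h (h'.trans inter_subset_right)
  r_submod := fun _ _ h h' =>
    M.r_submod (h.trans inter_subset_right) (h'.trans inter_subset_right)

/-- The contraction `M/C` of `C` in `M`, with rank function `A ↦ r (A ∪ C) - r C`. -/
def contract (M : FinMatroid α) (C : Finset α) : FinMatroid α where
  E := M.E \ C
  r := fun A => M.r (A ∪ C ∩ M.E) - M.r (C ∩ M.E)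
  r_le_card := by
    intro A hA
    have hAE : A ⊆ M.E := hA.trans sdiff_subset
    have hc : C ∩ M.E ⊆ M.E := inter_subset_right
    have h1 := M.r_submod hAE hc
    have h2 := M.r_le_card hAE
    beta_reduce
    omega
  r_mono := by
    intro A B hAB hB
    have hBE : B ⊆ M.E := hB.trans sdiff_subset
    have hc : C ∩ M.E ⊆ M.E := inter_subset_right
    have h1 : M.r (A ∪ C ∩ M.E) ≤ M.r (B ∪ C ∩ M.E) :=
      M.r_mono (union_subset_union hAB (Finset.Subset.refl _)) (union_subset hBE hc)
    beta_reduce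
    omega
  r_submod := by
    intro A B hA hB
    have hAE : A ⊆ M.E := hA.trans sdiff_subset
    have hBE : B ⊆ M.E := hB.trans sdiff_subset
    have hc : C ∩ M.E ⊆ M.E := inter_subset_right
    have hAc : A ∪ C ∩ M.E ⊆ M.E := union_subset hAE hc
    have hBc : B ∪ C ∩ M.E ⊆ M.E := union_subset hBE hc
    have h1 := M.r_submod hAc hBc
    have e1 : (A ∪ C ∩ M.E) ∪ (B ∪ C ∩ M.E) = (A ∪ B) ∪ C ∩ M.E := by
      ext x; simp only [Finset.mem_union, Finset.mem_inter]; tauto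
    have e2 : (A ∪ C ∩ M.E) ∩ (B ∪ C ∩ M.E) = (A ∩ B) ∪ C ∩ M.E := by
      ext x; simp only [Finset.mem_union, Finset.mem_inter]; tauto
    rw [e1, e2] at h1
    have hABc : (A ∩ B) ∪ C ∩ M.E ⊆ M.E := union_subset (inter_subset_left.trans hAE) hc
    have hABc' : (A ∪ B) ∪ C ∩ M.E ⊆ M.E := union_subset (union_subset hAE hBE) hc
    have h2 : M.r (C ∩ M.E) ≤ M.r ((A ∩ B) ∪ C ∩ M.E) := M.r_mono subset_union_right hABc
    have h3 : M.r (C ∩ M.E) ≤ M.r (A ∪ C ∩ M.E) := M.r_mono subset_union_right hAc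
    have h4 : M.r (C ∩ M.E) ≤ M.r (B ∪ C ∩ M.E) := M.r_mono subset_union_right hBc
    have h5 : M.r (C ∩ M.E) ≤ M.r ((A ∪ B) ∪ C ∩ M.E) := M.r_mono subset_union_right hABc'
    beta_reduce
    omega

/-- `A` is a separator of `M` if `r A + r (E \ A) = r E`. -/
def Separator (M : FinMatroid α) (A : Finset α) : Prop :=
  A ⊆ M.E ∧ M.r A + M.r (M.E \ A) = M.r M.E

/-- `M` is connected (inseparable) if its ground set is nonempty and its only
separators are `∅` and `E`. -/
def Connected (M : FinMatroid α) : Prop :=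
  M.E.Nonempty ∧ ∀ A : Finset α, M.Separator A → A = ∅ ∨ A = M.E

/-- For connected `M`, a set `∅ ≠ F ⊊ E` is non-degenerate if both `M|F` and `M/F`
are connected. -/
def Nondegenerate (M : FinMatroid α) (F : Finset α) : Prop :=
  F ≠ ∅ ∧ F ⊂ M.E ∧ (M.restrict F).Connected ∧ (M.contract F).Connected

end FinMatroid

noncomputable section

open FinMatroid

/-- The indicator (incidence) vector `1^A ∈ ℝ^α` of a finite set `A`. -/
def indicatorVec {α : Type*} [DecidableEq α] (A : Finset α) : α → ℝ :=
  fun i => if i ∈ A then 1 else 0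

/-- The base polytope of a matroid: the convex hull of the indicator vectors of its bases. -/
def basePolytope {α : Type*} [DecidableEq α] (M : FinMatroid α) : Set (α → ℝ) :=
  convexHull ℝ {x | ∃ B : Finset α, M.Base B ∧ x = indicatorVec B}

/-- `Q` is a face of `P`: either `∅`, or `P` itself, or the subset of `P` where some
linear functional attains its maximum over `P` (an exposed face). -/
def IsFaceOf {α : Type*} (P Q : Set (α → ℝ)) : Prop :=
  Q = ∅ ∨ Q = P ∨ ∃ ℓ : (α → ℝ) →ₗ[ℝ] ℝ, Q = {x ∈ P | ∀ y ∈ P, ℓ y ≤ ℓ x}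

/-- The dimension of a convex set: the dimension of the direction of its affine span. -/
def sdim {α : Type*} (Q : Set (α → ℝ)) : ℕ :=
  Module.finrank ℝ (affineSpan ℝ Q).direction

end

/-- `F_σ⁺ := ⋃_{i ∈ σ} F i`. -/
def Fplus {α : Type*} [DecidableEq α] {m : ℕ} (F : Fin m → Finset α) (σ : Finset (Fin m)) :
    Finset α :=
  σ.sup F

/-- `F_σ⁻ := ⋂_{j ∉ σ} F j`, with the empty intersection equal to the ground set `E`. -/
def Fminus {α : Type*} [DecidableEq α] {m : ℕ} (M : FinMatroid α) (F : Fin m → Finset α)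
    (σ : Finset (Fin m)) : Finset α :=
  M.E.filter (fun x => ∀ j, j ∉ σ → x ∈ F j)


/-!
A set `X` is tight for an independent set `B` when `|B ∩ X| = r X`. By submodularity of `r`
and modularity of `X ↦ |B ∩ X|`, together with `|B ∩ X| ≤ r X`, tight sets are closed under
union and intersection. If `B` is a base, every `F i` and the ground set are tight, hence so
are `F_σ⁺` and `F_σ⁻ ∪ F_σ⁺`. Contracting a tight set `C` keeps `X` tight whenever `X ∪ C` is,
and `B ∩ X` is a basis of `X` as soon as both `X` and `B ∩ X` are tight. In `M / F_σ⁺` this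
applies to `X = F_σ⁻ \ F_σ⁺`.
-/

namespace FinMatroid

variable {α : Type*} [DecidableEq α] {M : FinMatroid α} {B C I X Y : Finset α}

lemma r_empty (M : FinMatroid α) : M.r ∅ = 0 :=
  Nat.le_zero.mp (by simpa using M.r_le_card (empty_subset _))

lemma Indep.subset (hI : M.Indep I) (hXI : X ⊆ I) : M.Indep X := by
  obtain ⟨hIE, hrI⟩ := hI
  have hXE : X ⊆ M.E := hXI.trans hIE
  have hDE : I \ X ⊆ M.E := sdiff_subset.trans hIE
  have hsub := M.r_submod hXE hDE
  rw [union_sdiff_of_subset hXI, inter_sdiff_self, r_empty] at hsub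
  have hD := M.r_le_card hDE
  have hcard := card_sdiff_add_card_eq_card hXI
  exact ⟨hXE, le_antisymm (M.r_le_card hXE) (by omega)⟩

lemma Indep.card_inter_le_r (hB : M.Indep B) (hX : X ⊆ M.E) : (B ∩ X).card ≤ M.r X :=
  calc (B ∩ X).card = M.r (B ∩ X) := ((hB.subset inter_subset_left).2).symm
    _ ≤ M.r X := M.r_mono inter_subset_right hX

lemma r_union_eq_of_forall_r_union_singleton_eq (hX : X ⊆ M.E) (hY : Y ⊆ M.E)
    (h : ∀ y ∈ Y, M.r (X ∪ {y}) = M.r X) : M.r (X ∪ Y) = M.r X := by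
  induction Y using Finset.induction_on with
  | empty => simp
  | @insert y Y hy ih =>
    have hYE : Y ⊆ M.E := (subset_insert _ _).trans hY
    have hyE : ({y} : Finset α) ⊆ M.E := singleton_subset_iff.mpr (hY (mem_insert_self y Y))
    have hXY := ih hYE fun z hz ↦ h z (mem_insert_of_mem hz)
    have hsub := M.r_submod (union_subset hX hYE) (union_subset hX hyE)
    have hunion : (X ∪ Y) ∪ (X ∪ {y}) = X ∪ insert y Y := by
      ext z; simp only [mem_union, mem_insert, mem_singleton]; tauto
    rw [hunion] at hsub
    have hinter : M.r X ≤ M.r ((X ∪ Y) ∩ (X ∪ {y})) :=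
      M.r_mono (subset_inter subset_union_left subset_union_left)
        (inter_subset_right.trans (union_subset hX hyE))
    have hmono : M.r X ≤ M.r (X ∪ insert y Y) :=
      M.r_mono subset_union_left (union_subset hX hY)
    have := h y (mem_insert_self y Y)
    omega

lemma Base.r_ground (hB : M.Base B) : M.r M.E = B.card := by
  obtain ⟨⟨hBE, hrB⟩, hmax⟩ := hB
  -- maximality of `B` forbids `r (B ∪ {x}) = |B| + 1` for `x ∉ B`
  have hspan : ∀ x ∈ M.E, M.r (B ∪ {x}) = M.r B := by
    intro x hx
    by_cases hxB : x ∈ B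
    · rw [union_eq_left.mpr (singleton_subset_iff.mpr hxB)]
    · have hBxE : B ∪ {x} ⊆ M.E := union_subset hBE (singleton_subset_iff.mpr hx)
      have hcard : (B ∪ {x}).card = B.card + 1 := by
        rw [union_comm, ← insert_eq, card_insert_of_notMem hxB]
      have hle := M.r_le_card hBxE
      have hge := M.r_mono subset_union_left hBxE
      by_contra hne
      have hind : M.Indep (B ∪ {x}) := ⟨hBxE, by omega⟩
      exact hxB (hmax hind subset_union_left ▸ mem_union_right B (mem_singleton_self x))
  have := r_union_eq_of_forall_r_union_singleton_eq hBE subset_rfl hspan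
  rwa [union_eq_right.mpr hBE, hrB] at this

variable (M) in
def Tight (B X : Finset α) : Prop :=
  X ⊆ M.E ∧ M.r X = (B ∩ X).card

lemma card_inter_union_add_card_inter_inter (B X Y : Finset α) :
    (B ∩ (X ∪ Y)).card + (B ∩ (X ∩ Y)).card = (B ∩ X).card + (B ∩ Y).card := by
  rw [inter_union_distrib_left, inter_inter_distrib_left, card_union_add_card_inter]

lemma Tight.union (hB : M.Indep B) (hX : M.Tight B X) (hY : M.Tight B Y) :
    M.Tight B (X ∪ Y) := by
  obtain ⟨hXE, hrX⟩ := hX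
  obtain ⟨hYE, hrY⟩ := hY
  have hsub := M.r_submod hXE hYE
  have hinter := hB.card_inter_le_r (inter_subset_left.trans hXE : X ∩ Y ⊆ M.E)
  have hunion := hB.card_inter_le_r (union_subset hXE hYE)
  have := card_inter_union_add_card_inter_inter B X Y
  exact ⟨union_subset hXE hYE, by omega⟩

lemma Tight.inter (hB : M.Indep B) (hX : M.Tight B X) (hY : M.Tight B Y) :
    M.Tight B (X ∩ Y) := by
  obtain ⟨hXE, hrX⟩ := hX
  obtain ⟨hYE, hrY⟩ := hY
  have hsub := M.r_submod hXE hYE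
  have hinter := hB.card_inter_le_r (inter_subset_left.trans hXE : X ∩ Y ⊆ M.E)
  have hunion := hB.card_inter_le_r (union_subset hXE hYE)
  have := card_inter_union_add_card_inter_inter B X Y
  exact ⟨inter_subset_left.trans hXE, by omega⟩

lemma tight_empty (M : FinMatroid α) (B : Finset α) : M.Tight B ∅ :=
  ⟨empty_subset _, by simp [r_empty]⟩

lemma Indep.tight_of_subset (hB : M.Indep B) (hIB : I ⊆ B) : M.Tight B I :=
  ⟨(hB.subset hIB).1, by rw [inter_eq_right.mpr hIB]; exact (hB.subset hIB).2⟩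

lemma Base.tight_ground (hB : M.Base B) : M.Tight B M.E :=
  ⟨subset_rfl, by rw [hB.r_ground, inter_eq_left.mpr hB.1.1]⟩

lemma tight_sup {ι : Type*} {G : ι → Finset α} (hB : M.Indep B) (hG : ∀ i, M.Tight B (G i))
    (τ : Finset ι) : M.Tight B (τ.sup G) := by
  classical
  induction τ using Finset.induction_on with
  | empty => exact tight_empty M B
  | @insert i τ _ ih => rw [sup_insert]; exact (hG i).union hB ih

lemma Base.tight_filter_forall_mem {ι : Type*} {G : ι → Finset α} (hB : M.Base B)
    (hG : ∀ i, M.Tight B (G i)) (τ : Finset ι) :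
    M.Tight B (M.E.filter fun x ↦ ∀ j ∈ τ, x ∈ G j) := by
  classical
  induction τ using Finset.induction_on with
  | empty => simpa using hB.tight_ground
  | @insert j τ _ ih =>
    have hfilter : M.E.filter (fun x ↦ ∀ k ∈ insert j τ, x ∈ G k)
        = G j ∩ M.E.filter (fun x ↦ ∀ k ∈ τ, x ∈ G k) := by
      ext x; simp only [mem_filter, mem_inter, forall_mem_insert]; tauto
    rw [hfilter]
    exact (hG j).inter hB.1 ih

lemma contract_r (hC : C ⊆ M.E) (X : Finset α) :
    (M.contract C).r X = M.r (X ∪ C) - M.r C := by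
  simp only [contract, inter_eq_left.mpr hC]

lemma Tight.contract (hC : M.Tight B C) (hXC : M.Tight B (X ∪ C)) (hdisj : Disjoint X C) :
    (M.contract C).Tight B X := by
  have hcard : (B ∩ (X ∪ C)).card = (B ∩ X).card + (B ∩ C).card := by
    rw [inter_union_distrib_left]
    exact card_union_of_disjoint (hdisj.mono inter_subset_right inter_subset_right)
  refine ⟨subset_sdiff.mpr ⟨subset_union_left.trans hXC.1, hdisj⟩, ?_⟩
  rw [contract_r hC.1, hXC.2, hC.2]
  omega

lemma basisOf_inter_of_tight (hBX : M.Tight B (B ∩ X)) (hX : M.Tight B X) :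
    M.BasisOf (B ∩ X) X := by
  have hind : M.Indep (B ∩ X) := ⟨hBX.1, by rw [hBX.2, ← inter_assoc, inter_self]⟩
  refine ⟨inter_subset_right, hind, fun J hJX hJ hBXJ ↦ ?_⟩
  have hle : J.card ≤ (B ∩ X).card := by
    rw [← hJ.2, ← hX.2]; exact M.r_mono hJX hX.1
  exact (eq_of_subset_of_card_le hBXJ hle).symm

theorem Tight.basisOf_contract (hB : M.Indep B) (hC : M.Tight B C) (hX : M.Tight B X)
    (hCX : C ⊆ X) : (M.contract C).BasisOf (B ∩ (X \ C)) (X \ C) := by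
  have hIC : M.Tight B (B ∩ (X \ C) ∪ C) := (hB.tight_of_subset inter_subset_left).union hB hC
  refine basisOf_inter_of_tight (hC.contract hIC ?_) (hC.contract ?_ sdiff_disjoint)
  · exact disjoint_sdiff_self_left.mono_left inter_subset_right
  · rwa [sdiff_union_of_subset hCX]

end FinMatroid

open FinMatroid

/-- If `B` is a base with `|B ∩ F i| = r (F i)` for all `i`, then for every
`σ ⊆ [m]`, the set `B ∩ (F_σ⁻ \ F_σ⁺)` is a basis of `F_σ⁻ \ F_σ⁺` in `M / F_σ⁺`. -/
theorem statement4 {α : Type*} [DecidableEq α] {m : ℕ} (M : FinMatroid α)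
    (F : Fin m → Finset α) (hF : ∀ i, F i ⊆ M.E)
    (B : Finset α) (hB : M.Base B) (hcard : ∀ i, (B ∩ F i).card = M.r (F i))
    (σ : Finset (Fin m)) :
    (M.contract (Fplus F σ)).BasisOf (B ∩ (Fminus M F σ \ Fplus F σ))
      (Fminus M F σ \ Fplus F σ) := by
  have hFi : ∀ i, M.Tight B (F i) := fun i ↦ ⟨hF i, (hcard i).symm⟩
  have hplus : M.Tight B (Fplus F σ) := tight_sup hB.1 hFi σ
  have hminus : M.Tight B (Fminus M F σ) := by
    have hfilter : Fminus M F σ = M.E.filter fun x ↦ ∀ j ∈ σᶜ, x ∈ F j := by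
      simp only [Fminus, mem_compl]
    rw [hfilter]
    convert hB.tight_filter_forall_mem hFi σᶜ
  have h := hplus.basisOf_contract hB.1 (hminus.union hB.1 hplus) subset_union_right
  rwa [union_sdiff_right] at h
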